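/- arXiv:2110.02620 — 2 statements merged into one kernel-verified Lean document; each statement's English description precedes it below -/
import Mathlib

section
/- Let n ≥ 2, m ∈ {1,...,n}, α < 0 with α > 2 - 2n/m, and p > 0. Then ∫_{B(0,1)} (|z|^α - 1)^p |z|^{(α-2)m} dV_{2n}(z) < ∞ if and only if p < (-2n + (2-α)m)/α. -/
/-!
In polar coordinates the integral is finite iff
`∫₀¹ (r ^ α - 1) ^ p * r ^ ((α - 2) * m + 2 * n - 1) dr` is. As `α < 0`, the factor
`(r ^ α - 1) ^ p` is at most `r ^ (α * p)` on `(0, 1)` and at least a positive multiple of it on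
`(0, 1 / 2)`, so this happens iff `α * p + (α - 2) * m + 2 * n > 0`; dividing by `α < 0` gives
the bound on `p`.
-/

open Set Metric MeasureTheory Real
open scoped ENNReal

theorem lintegral_ball_ofReal_fun_norm_lt_top_iff {E : Type*} [NormedAddCommGroup E]
    [NormedSpace ℝ E] [MeasurableSpace E] [BorelSpace E] [FiniteDimensional ℝ E] [Nontrivial E]
    (μ : Measure E) [μ.IsAddHaarMeasure] {f : ℝ → ℝ} (hf : Measurable f) {R : ℝ}
    (hf_nonneg : ∀ r ∈ Ioo 0 R, 0 ≤ f r) :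
    ∫⁻ x in ball 0 R, ENNReal.ofReal (f ‖x‖) ∂μ < ∞ ↔
      IntegrableOn (fun r ↦ r ^ (Module.finrank ℝ E - 1) * f r) (Ioo 0 R) := by
  have hnonneg : 0 ≤ᵐ[μ.restrict (ball 0 R)] fun x ↦ f ‖x‖ := by
    filter_upwards [ae_restrict_mem measurableSet_ball,
      ae_restrict_of_ae (compl_mem_ae_iff.mpr (measure_singleton (μ := μ) 0))] with x hxR hx0
    exact hf_nonneg _ ⟨norm_pos_iff.mpr hx0, mem_ball_zero_iff.mp hxR⟩
  rw [lt_top_iff_ne_top]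
  exact (lintegral_ofReal_ne_top_iff_integrable
    (hf.comp measurable_norm).aestronglyMeasurable hnonneg).trans (integrableOn_fun_norm_addHaar μ)

theorem rpow_sub_one_rpow_le {α p r : ℝ} (hα : α ≤ 0) (hp : 0 ≤ p) (hr₀ : 0 < r) (hr₁ : r ≤ 1) :
    (r ^ α - 1) ^ p ≤ r ^ (α * p) := by
  have h1 : 1 ≤ r ^ α := one_le_rpow_of_pos_of_le_one_of_nonpos hr₀ hr₁ hα
  rw [rpow_mul hr₀.le]
  exact rpow_le_rpow (by linarith) (by linarith) hp

theorem mul_rpow_le_rpow_sub_one_rpow {α p r : ℝ} (hα : α ≤ 0) (hp : 0 ≤ p) (hr₀ : 0 < r)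
    (hr : r ≤ 1 / 2) :
    (1 - 2 ^ α) ^ p * r ^ (α * p) ≤ (r ^ α - 1) ^ p := by
  have h2r : 1 ≤ 2 ^ α * r ^ α := by
    rw [← mul_rpow zero_le_two hr₀.le]
    exact one_le_rpow_of_pos_of_le_one_of_nonpos (by positivity) (by linarith) hα
  have h2α : 2 ^ α ≤ (1 : ℝ) := rpow_le_one_of_one_le_of_nonpos one_le_two hα
  rw [rpow_mul hr₀.le, ← mul_rpow (by linarith) (by positivity)]
  exact rpow_le_rpow (by nlinarith [rpow_nonneg hr₀.le α]) (by nlinarith) hp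

theorem integrableOn_Ioo_rpow_sub_one_rpow_mul_rpow_iff {α p s : ℝ} (hα : α < 0) (hp : 0 < p) :
    IntegrableOn (fun r : ℝ ↦ (r ^ α - 1) ^ p * r ^ s) (Ioo 0 1) ↔ -1 < α * p + s := by
  have hmeas : AEStronglyMeasurable (fun r : ℝ ↦ (r ^ α - 1) ^ p * r ^ s) :=
    (by fun_prop : Measurable fun r : ℝ ↦ (r ^ α - 1) ^ p * r ^ s).aestronglyMeasurable
  have hsplit : ∀ r : ℝ, 0 < r → r ^ (α * p + s) = r ^ (α * p) * r ^ s :=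
    fun r hr ↦ rpow_add hr _ _
  constructor
  · intro hf
    have hκ : 0 < (1 - (2 : ℝ) ^ α) ^ p :=
      rpow_pos_of_pos (sub_pos.mpr (rpow_lt_one_of_one_lt_of_neg one_lt_two hα)) p
    have hdom : IntegrableOn (fun r : ℝ ↦ ((1 - (2 : ℝ) ^ α) ^ p)⁻¹ * ((r ^ α - 1) ^ p * r ^ s))
        (Ioo 0 (1 / 2)) :=
      (hf.mono_set (Ioo_subset_Ioo_right (by norm_num))).const_mul _
    refine (intervalIntegral.integrableOn_Ioo_rpow_iff (by norm_num : (0 : ℝ) < 1 / 2)).mp <|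
      hdom.mono' (by fun_prop) (ae_restrict_of_forall_mem measurableSet_Ioo fun r hr ↦ ?_)
    rw [norm_of_nonneg (rpow_nonneg hr.1.le _), hsplit r hr.1, le_inv_mul_iff₀ hκ, ← mul_assoc]
    exact mul_le_mul_of_nonneg_right
      (mul_rpow_le_rpow_sub_one_rpow hα.le hp.le hr.1 hr.2.le) (rpow_nonneg hr.1.le s)
  · intro hs
    refine ((intervalIntegral.integrableOn_Ioo_rpow_iff one_pos).mpr hs).mono' hmeas.restrict
      (ae_restrict_of_forall_mem measurableSet_Ioo fun r hr ↦ ?_)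
    have hbase : 0 ≤ r ^ α - 1 := by
      linarith [one_le_rpow_of_pos_of_le_one_of_nonpos hr.1 hr.2.le hα.le]
    rw [norm_of_nonneg (mul_nonneg (rpow_nonneg hbase p) (rpow_nonneg hr.1.le s)), hsplit r hr.1]
    exact mul_le_mul_of_nonneg_right
      (rpow_sub_one_rpow_le hα.le hp.le hr.1 hr.2.le) (rpow_nonneg hr.1.le s)

theorem stmt_9_general (n m : ℕ) (hn : 2 ≤ n)
    (α p : ℝ) (hα0 : α < 0) (hp : 0 < p) :
    (∫⁻ z in Metric.ball (0 : EuclideanSpace ℝ (Fin (2 * n))) 1,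
        ENNReal.ofReal ((‖z‖ ^ α - 1) ^ p * ‖z‖ ^ ((α - 2) * m)) ∂MeasureTheory.volume < ⊤)
      ↔ p < (-2 * n + (2 - α) * m) / α := by
  have : Nontrivial (EuclideanSpace ℝ (Fin (2 * n))) := by
    have : Nonempty (Fin (2 * n)) := ⟨⟨0, by omega⟩⟩
    infer_instance
  have hnonneg : ∀ r ∈ Ioo (0 : ℝ) 1, 0 ≤ (r ^ α - 1) ^ p * r ^ ((α - 2) * m) := fun r hr ↦
    mul_nonneg (rpow_nonneg (sub_nonneg.mpr
      (one_le_rpow_of_pos_of_le_one_of_nonpos hr.1 hr.2.le hα0.le)) p) (rpow_nonneg hr.1.le _)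
  have hradial : EqOn (fun r : ℝ ↦ r ^ (2 * n - 1) * ((r ^ α - 1) ^ p * r ^ ((α - 2) * m)))
      (fun r ↦ (r ^ α - 1) ^ p * r ^ ((α - 2) * m + (2 * n - 1))) (Ioo 0 1) := fun r hr ↦ by
    simp only
    rw [rpow_add hr.1, ← rpow_natCast]
    push_cast [show 1 ≤ 2 * n by omega]
    ring
  rw [lintegral_ball_ofReal_fun_norm_lt_top_iff _ (by fun_prop) hnonneg, finrank_euclideanSpace_fin,
    integrableOn_congr_fun hradial measurableSet_Ioo,
    integrableOn_Ioo_rpow_sub_one_rpow_mul_rpow_iff hα0 hp, lt_div_iff_of_neg hα0]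
  constructor <;> intro h <;> linarith

theorem stmt_9 (n m : ℕ) (hn : 2 ≤ n) (hm1 : 1 ≤ m) (hmn : m ≤ n)
    (α p : ℝ) (hα0 : α < 0) (hα1 : 2 - 2 * n / m < α) (hp : 0 < p) :
    (∫⁻ z in Metric.ball (0 : EuclideanSpace ℝ (Fin (2 * n))) 1,
        ENNReal.ofReal ((‖z‖ ^ α - 1) ^ p * ‖z‖ ^ ((α - 2) * m)) ∂MeasureTheory.volume < ⊤)
      ↔ p < (-2 * n + (2 - α) * m) / α :=
  stmt_9_general n m hn α p hα0 hp
end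

section
/- Let n ≥ 2, m ∈ {1,...,n-1}, and 0 < α < (n-1)/n. Define f_α(z) = |z|^{-2m} (-log|z|)^{αm - m - 1} ((2n-2m)(-log|z|) + m(1-α)) for z in the punctured ball B(0,1/2) ⊂ ℂ^n. Then ∫_{B(0,1/2)} f_α(z)^{n/m} dV_{2n}(z) < ∞. -/
/-! With `t = -log ‖z‖ ≥ log 2`, the linear factor of `f_α` is `O(t)`, so
`f_α(z)^(n/m) ≲ ‖z‖^(-2n) t^((α-1)n)`. In polar coordinates on `ℝ^(2n)` this becomes
`r⁻¹ (-log r)^((α-1)n) dr` on `(0, 1/2)`, and the substitution `r = exp (-t)` turns it into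
`t^((α-1)n) dt` on `(log 2, ∞)`, which is integrable because `(α-1)n < -1`, i.e. `α < (n-1)/n`. -/

open MeasureTheory Metric Real Set Module

theorem integrableOn_ball_comp_norm_iff {E : Type*} [NormedAddCommGroup E] [NormedSpace ℝ E]
    [Nontrivial E] [FiniteDimensional ℝ E] [MeasurableSpace E] [BorelSpace E]
    (μ : Measure E) [μ.IsAddHaarMeasure] (g : ℝ → ℝ) (R : ℝ) :
    IntegrableOn (fun z => g ‖z‖) (ball 0 R) μ ↔
      IntegrableOn (fun r => r ^ (finrank ℝ E - 1) * g r) (Ioo 0 R) := by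
  have h_ball : (ball (0 : E) R).indicator (fun z => g ‖z‖) =
      fun z => (Iio R).indicator g ‖z‖ := by
    ext z; simp [indicator]
  have h_Iio : (fun r : ℝ => r ^ (finrank ℝ E - 1) • (Iio R).indicator g r) =
      (Iio R).indicator (fun r => r ^ (finrank ℝ E - 1) * g r) := by
    ext r; simp [indicator]
  rw [← integrable_indicator_iff measurableSet_ball, h_ball, integrable_fun_norm_addHaar μ, h_Iio,
    integrableOn_indicator_iff measurableSet_Iio, Iio_inter_Ioi]

theorem integrableOn_inv_mul_neg_log_rpow {p c : ℝ} (hp : p < -1) (hc0 : 0 < c) (hc1 : c < 1) :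
    IntegrableOn (fun r => r⁻¹ * (-log r) ^ p) (Ioo 0 c) := by
  have h_image : (fun t => exp (-t)) '' Ioi (-log c) = Ioo 0 c := by
    rw [← Function.comp_def, image_comp, image_neg_Ioi, neg_neg, image_exp_Iio, exp_log hc0]
  rw [← h_image, integrableOn_image_iff_integrableOn_abs_deriv_smul measurableSet_Ioi
    (fun t _ => ((hasDerivAt_neg t).exp).hasDerivWithinAt) (exp_injective.comp neg_injective).injOn]
  refine (integrableOn_Ioi_rpow_of_lt hp (neg_pos.2 (log_neg hc0 hc1))).congr_fun
    (fun t _ => ?_) measurableSet_Ioi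
  simp [abs_of_pos (exp_pos _), ← exp_neg, ← mul_assoc, ← exp_add]

noncomputable def hessianDensity (n m α r : ℝ) : ℝ :=
  r ^ (-2 * m) * (-log r) ^ (α * m - m - 1) * ((2 * n - 2 * m) * (-log r) + m * (1 - α))

section hessianDensity

variable {n m α r : ℝ}

theorem hessianDensity_nonneg (hmn : m ≤ n) (hm : 0 ≤ m) (hα : α ≤ 1) (hr0 : 0 < r)
    (hr1 : r < 1) : 0 ≤ hessianDensity n m α r := by
  have ht : 0 < -log r := neg_pos.2 (log_neg hr0 hr1)
  have h_lin : 0 ≤ (2 * n - 2 * m) * -log r := mul_nonneg (by linarith) ht.le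
  have h_const : 0 ≤ m * (1 - α) := mul_nonneg hm (by linarith)
  unfold hessianDensity
  positivity

theorem hessianDensity_le (hm : 0 ≤ m) (hα : α ≤ 1) (hr0 : 0 < r) (hr : r ≤ 1 / 2) :
    hessianDensity n m α r ≤
      (2 * n - 2 * m + m * (1 - α) / log 2) * (r ^ (-2 * m) * (-log r) ^ (α * m - m)) := by
  set t := -log r
  have hlog2 : 0 < log 2 := log_pos one_lt_two
  have ht : log 2 ≤ t := by
    rw [le_neg, ← log_inv]
    exact log_le_log hr0 (by linarith)
  have ht0 : 0 < t := hlog2.trans_le ht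
  have h_lin : (2 * n - 2 * m) * t + m * (1 - α) ≤ (2 * n - 2 * m + m * (1 - α) / log 2) * t := by
    have : m * (1 - α) ≤ m * (1 - α) / log 2 * t := by
      rw [div_mul_eq_mul_div, le_div_iff₀ hlog2]
      exact mul_le_mul_of_nonneg_left ht (mul_nonneg hm (by linarith))
    linarith
  have h_pow : t ^ (α * m - m) = t ^ (α * m - m - 1) * t := by
    rw [← rpow_add_one ht0.ne']
    ring_nf
  calc hessianDensity n m α r
      ≤ r ^ (-2 * m) * t ^ (α * m - m - 1) * ((2 * n - 2 * m + m * (1 - α) / log 2) * t) :=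
        mul_le_mul_of_nonneg_left h_lin (by positivity)
    _ = _ := by rw [h_pow]; ring

end hessianDensity

theorem pow_mul_hessianDensity_rpow_le {n m : ℕ} {α r : ℝ} (hm : 0 < m) (hmn : m ≤ n)
    (hα : α ≤ 1) (hr0 : 0 < r) (hr : r ≤ 1 / 2) :
    r ^ (2 * n - 1) * hessianDensity n m α r ^ ((n : ℝ) / m) ≤
      (2 * n - 2 * m + m * (1 - α) / log 2) ^ ((n : ℝ) / m) *
        (r⁻¹ * (-log r) ^ ((α - 1) * n)) := by
  set K : ℝ := 2 * n - 2 * m + m * (1 - α) / log 2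
  set t := -log r
  have hm' : (0 : ℝ) < m := Nat.cast_pos.2 hm
  have hmn' : (m : ℝ) ≤ n := Nat.cast_le.2 hmn
  have ht0 : 0 < t := neg_pos.2 (log_neg hr0 (by linarith))
  have hK : 0 ≤ K :=
    add_nonneg (by linarith) (div_nonneg (mul_nonneg hm'.le (by linarith)) (log_pos one_lt_two).le)
  have h_density : hessianDensity n m α r ^ ((n : ℝ) / m) ≤
      K ^ ((n : ℝ) / m) * (r ^ (-2 * (n : ℝ)) * t ^ ((α - 1) * n)) :=
    calc hessianDensity n m α r ^ ((n : ℝ) / m)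
        ≤ (K * (r ^ (-2 * (m : ℝ)) * t ^ (α * m - m))) ^ ((n : ℝ) / m) :=
          rpow_le_rpow (hessianDensity_nonneg hmn' hm'.le hα hr0 (by linarith))
            (hessianDensity_le hm'.le hα hr0 hr) (by positivity)
      _ = K ^ ((n : ℝ) / m) * (r ^ (-2 * (n : ℝ)) * t ^ ((α - 1) * n)) := by
          rw [mul_rpow hK (by positivity), mul_rpow (by positivity) (by positivity),
            ← rpow_mul hr0.le, ← rpow_mul ht0.le]
          congr 3 <;> field_simp
  have h_cancel : r ^ (2 * n - 1) * r ^ (-2 * (n : ℝ)) = r⁻¹ := by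
    rw [← rpow_natCast, ← rpow_add hr0, ← rpow_neg_one]
    congr 1
    push_cast [Nat.cast_sub (by omega : 1 ≤ 2 * n)]
    ring
  calc r ^ (2 * n - 1) * hessianDensity n m α r ^ ((n : ℝ) / m)
      ≤ r ^ (2 * n - 1) * (K ^ ((n : ℝ) / m) * (r ^ (-2 * (n : ℝ)) * t ^ ((α - 1) * n))) :=
        mul_le_mul_of_nonneg_left h_density (by positivity)
    _ = K ^ ((n : ℝ) / m) * ((r ^ (2 * n - 1) * r ^ (-2 * (n : ℝ))) * t ^ ((α - 1) * n)) := by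
        ring
    _ = _ := by rw [h_cancel]

theorem integrableOn_pow_mul_hessianDensity_rpow {n m : ℕ} {α : ℝ} (hm : 0 < m) (hmn : m ≤ n)
    (hα : (α - 1) * n < -1) :
    IntegrableOn (fun r => r ^ (2 * n - 1) * hessianDensity n m α r ^ ((n : ℝ) / m))
      (Ioo 0 (1 / 2)) := by
  have hα1 : α ≤ 1 := by nlinarith [(Nat.cast_nonneg n : (0 : ℝ) ≤ n)]
  refine ((integrableOn_inv_mul_neg_log_rpow hα (by norm_num) (by norm_num)).const_mul
    ((2 * n - 2 * m + m * (1 - α) / log 2) ^ ((n : ℝ) / m))).mono' ?_ ?_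
  · unfold hessianDensity
    fun_prop
  · filter_upwards [ae_restrict_mem measurableSet_Ioo] with r ⟨hr0, hr⟩
    have h_nonneg := hessianDensity_nonneg (n := n) (α := α) (Nat.cast_le.2 hmn) (Nat.cast_nonneg m) hα1
      hr0 (by linarith)
    rw [norm_of_nonneg (by positivity)]
    exact pow_mul_hessianDensity_rpow_le hm hmn hα1 hr0 hr.le

theorem stmt_11_general (n m : ℕ) (hm1 : 1 ≤ m) (hmn : m ≤ n - 1)
    (α : ℝ) (hα1 : α < (n - 1 : ℝ) / n) :
    ∫⁻ z in Metric.ball (0 : EuclideanSpace ℝ (Fin (2 * n))) (1 / 2),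
        ENNReal.ofReal
          ((‖z‖ ^ (-2 * (m : ℝ)) * (-Real.log ‖z‖) ^ (α * m - m - 1) *
              ((2 * n - 2 * m) * (-Real.log ‖z‖) + m * (1 - α))) ^ ((n : ℝ) / m))
        ∂MeasureTheory.volume < ⊤ := by
  have hα : (α - 1) * n < -1 := by
    have := (lt_div_iff₀ (Nat.cast_pos.2 (by omega) : (0 : ℝ) < n)).1 hα1
    linarith
  have : Nonempty (Fin (2 * n)) := ⟨⟨0, by omega⟩⟩
  have h_radial := integrableOn_pow_mul_hessianDensity_rpow hm1 (hmn.trans (Nat.sub_le n 1)) hα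
  rw [← finrank_euclideanSpace_fin (𝕜 := ℝ) (n := 2 * n),
    ← integrableOn_ball_comp_norm_iff volume] at h_radial
  exact h_radial.setLIntegral_lt_top

theorem stmt_11 (n m : ℕ) (hn : 2 ≤ n) (hm1 : 1 ≤ m) (hmn : m ≤ n - 1)
    (α : ℝ) (hα0 : 0 < α) (hα1 : α < (n - 1 : ℝ) / n) :
    ∫⁻ z in Metric.ball (0 : EuclideanSpace ℝ (Fin (2 * n))) (1 / 2),
        ENNReal.ofReal
          ((‖z‖ ^ (-2 * (m : ℝ)) * (-Real.log ‖z‖) ^ (α * m - m - 1) *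
              ((2 * n - 2 * m) * (-Real.log ‖z‖) + m * (1 - α))) ^ ((n : ℝ) / m))
        ∂MeasureTheory.volume < ⊤ :=
  stmt_11_general n m hm1 hmn α hα1
end
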